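/- Let L = (S, Act, →) be a labelled transition system, σ a path in L, and φ an ACTL* formula. Then the mapping ks preserves truth: L,σ ⊨ φ if and only if ks(L), ks(σ) ⊨ ks(φ). -/

import Mathlib

namespace Stmt0

/-- A path in a labelled transition system with transition relation `Tr ⊆ S × Act × S`. -/
structure LPath {S Act : Type} (Tr : S → Act → S → Prop) where
  states : ℕ → S
  acts : ℕ → Act
  valid : ∀ n, Tr (states n) (acts n) (states (n + 1))

/-- The suffix of a path, starting at position `k`. -/
def LPath.suffix {S Act : Type} {Tr : S → Act → S → Prop} (σ : LPath Tr) (k : ℕ) :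
    LPath Tr where
  states n := σ.states (n + k)
  acts n := σ.acts (n + k)
  valid n := by
    have h := σ.valid (n + k)
    rwa [show n + k + 1 = n + 1 + k by omega] at h

/-- A path in a Kripke structure with transition relation `R ⊆ S × S`. -/
structure KPath {S : Type} (R : S → S → Prop) where
  states : ℕ → S
  valid : ∀ n, R (states n) (states (n + 1))

/-- The suffix of a path in a Kripke structure, starting at position `k`. -/
def KPath.suffix {S : Type} {R : S → S → Prop} (σ : KPath R) (k : ℕ) : KPath R where
  states n := σ.states (n + k)
  valid n := by
    have h := σ.valid (n + k)
    rwa [show n + k + 1 = n + 1 + k by omega] at h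

mutual
/-- ACTL* state formulas over actions `Act`:
`φ ::= true | ¬φ | φ∧φ' | ∃π`. -/
inductive ASF (Act : Type) : Type
  | tt : ASF Act
  | neg : ASF Act → ASF Act
  | and : ASF Act → ASF Act → ASF Act
  | ex : APF Act → ASF Act

/-- ACTL* path formulas over actions `Act`:
`π ::= φ | ¬π | π∧π' | Xπ | X_a π | π U π'`. -/
inductive APF (Act : Type) : Type
  | state : ASF Act → APF Act
  | neg : APF Act → APF Act
  | and : APF Act → APF Act → APF Act
  | next : APF Act → APF Act
  | anext : Act → APF Act → APF Act
  | unt : APF Act → APF Act → APF Act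
end

mutual
/-- Satisfaction of ACTL* state formulas at a state of an LTS. -/
def asatS {S Act : Type} (Tr : S → Act → S → Prop) : ASF Act → S → Prop
  | .tt, _ => True
  | .neg φ, s => ¬ asatS Tr φ s
  | .and φ ψ, s => asatS Tr φ s ∧ asatS Tr ψ s
  | .ex π, s => ∃ σ : LPath Tr, σ.states 0 = s ∧ asatP Tr π σ

/-- Satisfaction of ACTL* path formulas on a path of an LTS. -/
def asatP {S Act : Type} (Tr : S → Act → S → Prop) : APF Act → LPath Tr → Prop
  | .state φ, σ => asatS Tr φ (σ.states 0)
  | .neg π, σ => ¬ asatP Tr π σ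
  | .and π π', σ => asatP Tr π σ ∧ asatP Tr π' σ
  | .next π, σ => asatP Tr π (σ.suffix 1)
  | .anext a π, σ => σ.acts 0 = a ∧ asatP Tr π (σ.suffix 1)
  | .unt π π', σ => ∃ j, asatP Tr π' (σ.suffix j) ∧ ∀ i < j, asatP Tr π (σ.suffix i)
end

mutual
/-- CTL* state formulas over atomic propositions `AP`:
`φ ::= true | p | ¬φ | φ∧φ' | ∃π`. -/
inductive CSF (AP : Type) : Type
  | tt : CSF AP
  | atom : AP → CSF AP
  | neg : CSF AP → CSF AP
  | and : CSF AP → CSF AP → CSF AP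
  | ex : CPF AP → CSF AP

/-- CTL* path formulas over atomic propositions `AP`:
`π ::= φ | ¬π | π∧π' | Xπ | π U π'`. -/
inductive CPF (AP : Type) : Type
  | state : CSF AP → CPF AP
  | neg : CPF AP → CPF AP
  | and : CPF AP → CPF AP → CPF AP
  | next : CPF AP → CPF AP
  | unt : CPF AP → CPF AP → CPF AP
end

mutual
/-- Satisfaction of CTL* state formulas at a state of a Kripke structure. -/
def csatS {S AP : Type} (R : S → S → Prop) (Lab : S → Set AP) : CSF AP → S → Prop
  | .tt, _ => True
  | .atom p, s => p ∈ Lab s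
  | .neg φ, s => ¬ csatS R Lab φ s
  | .and φ ψ, s => csatS R Lab φ s ∧ csatS R Lab ψ s
  | .ex π, s => ∃ σ : KPath R, σ.states 0 = s ∧ csatP R Lab π σ

/-- Satisfaction of CTL* path formulas on a path of a Kripke structure. -/
def csatP {S AP : Type} (R : S → S → Prop) (Lab : S → Set AP) : CPF AP → KPath R → Prop
  | .state φ, σ => csatS R Lab φ (σ.states 0)
  | .neg π, σ => ¬ csatP R Lab π σ
  | .and π π', σ => csatP R Lab π σ ∧ csatP R Lab π' σ
  | .next π, σ => csatP R Lab π (σ.suffix 1)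
  | .unt π π', σ => ∃ j, csatP R Lab π' (σ.suffix j) ∧ ∀ i < j, csatP R Lab π (σ.suffix i)
end

section ksConstruction

variable {S Act : Type} (Tr : S → Act → S → Prop)

/-- States of the Kripke structure `ks(L)`: the states of `L` together with one fresh
state for each transition of `L`. -/
abbrev KState := S ⊕ {t : S × Act × S // Tr t.1 t.2.1 t.2.2}

/-- The fresh atomic proposition `F` (the atomic propositions of `ks(L)` are `Act ∪ {F}`). -/
def Fprop : Act ⊕ Unit := Sum.inr ()

/-- Transitions of `ks(L)`: for every transition `(s₀, α, s₁)` of `L`, the new state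
`(s₀, α, s₁)` sits between `s₀` and `s₁`. -/
def KTrans : KState Tr → KState Tr → Prop
  | .inl s, .inr t => t.1.1 = s
  | .inr t, .inl s => t.1.2.2 = s
  | _, _ => False

/-- Labelling of `ks(L)`: original states are labelled `{F}`, the state corresponding to a
transition `(s₀, α, s₁)` is labelled `{α}`. -/
def KLab : KState Tr → Set (Act ⊕ Unit)
  | .inl _ => {Sum.inr ()}
  | .inr t => {Sum.inl t.1.2.1}

/-- The path `ks(σ)` in `ks(L)` induced by a path `σ` in `L`: between consecutive states of
`σ` the corresponding transition-state is inserted. -/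
def ksPath (σ : LPath Tr) : KPath (KTrans Tr) where
  states n :=
    if n % 2 = 0 then Sum.inl (σ.states (n / 2))
    else Sum.inr ⟨(σ.states (n / 2), σ.acts (n / 2), σ.states (n / 2 + 1)), σ.valid (n / 2)⟩
  valid n := by
    rcases Nat.even_or_odd n with ⟨k, hk⟩ | ⟨k, hk⟩
    · have h1 : n % 2 = 0 := by omega
      have h2 : ¬ (n + 1) % 2 = 0 := by omega
      have h3 : (n + 1) / 2 = n / 2 := by omega
      simp only [h1, h2, if_true, if_false, h3, KTrans]
    · have h1 : ¬ n % 2 = 0 := by omega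
      have h2 : (n + 1) % 2 = 0 := by omega
      have h3 : (n + 1) / 2 = n / 2 + 1 := by omega
      simp only [h1, h2, if_true, if_false, h3, KTrans]

end ksConstruction

/-- The atomic proposition `F`, as a CTL* path formula. -/
def Fpf (Act : Type) : CPF (Act ⊕ Unit) := .state (.atom (Sum.inr ()))

mutual
/-- The translation `ks` from ACTL* state formulas to CTL* state formulas. -/
def ksS {Act : Type} : ASF Act → CSF (Act ⊕ Unit)
  | .tt => .tt
  | .neg φ => .neg (ksS φ)
  | .and φ ψ => .and (ksS φ) (ksS ψ)
  | .ex π => .ex (ksP π)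

/-- The translation `ks` from ACTL* path formulas to CTL* path formulas.
(Implication `F ⇒ ψ` is expressed as `¬(F ∧ ¬ψ)`.) -/
def ksP {Act : Type} : APF Act → CPF (Act ⊕ Unit)
  | .state φ => .state (ksS φ)
  | .neg π => .neg (ksP π)
  | .and π π' => .and (ksP π) (ksP π')
  | .next π => .next (.next (ksP π))
  | .anext a π => .and (.next (.state (.atom (Sum.inl a)))) (.next (.next (ksP π)))
  | .unt π π' =>
      .unt (.neg (.and (Fpf Act) (.neg (ksP π)))) (.and (Fpf Act) (ksP π'))
end

/-!
The Kripke path `ks(σ)` visits the states of `σ` at the even positions, labelled `F`, and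
the transition-states at the odd positions, labelled by their action. So one step of `σ` is two
steps of `ks(σ)`, which explains `X ↦ XX`, and the guards `F` in the translation of `U`
confine the until to the even positions. Conversely, every path of `ks(L)` starting at an
original state alternates between the two kinds of states, hence is `ks(σ)` for a path `σ`
of `L`; this makes the translation of `∃` faithful.
-/

theorem KPath.ext {S : Type} {R : S → S → Prop} {τ τ' : KPath R}
    (h : ∀ n, τ.states n = τ'.states n) : τ = τ' := by
  obtain ⟨f, _⟩ := τ
  obtain ⟨g, _⟩ := τ'
  obtain rfl : f = g := funext h
  rfl

@[simp]
theorem KPath.suffix_states {S : Type} {R : S → S → Prop} (τ : KPath R) (k n : ℕ) :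
    (τ.suffix k).states n = τ.states (n + k) :=
  rfl

theorem KPath.suffix_suffix {S : Type} {R : S → S → Prop} (τ : KPath R) (k m : ℕ) :
    (τ.suffix k).suffix m = τ.suffix (k + m) :=
  KPath.ext fun n => by simp only [KPath.suffix_states, Nat.add_assoc, Nat.add_comm m k]

theorem until_even_iff (A B : ℕ → Prop) :
    (∃ j, (Even j ∧ B j) ∧ ∀ i < j, ¬(Even i ∧ ¬A i)) ↔
      ∃ k, B (2 * k) ∧ ∀ m < k, A (2 * m) := by
  constructor
  · rintro ⟨j, ⟨⟨k, rfl⟩, hB⟩, hA⟩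
    refine ⟨k, by rwa [two_mul], fun m hm => ?_⟩
    by_contra h
    exact hA (2 * m) (by omega) ⟨even_two_mul m, h⟩
  · rintro ⟨k, hB, hA⟩
    refine ⟨2 * k, ⟨even_two_mul k, hB⟩, ?_⟩
    rintro i hi ⟨⟨m, rfl⟩, h⟩
    exact h (by simpa only [two_mul] using hA m (by omega))

section ks

variable {S Act : Type} {Tr : S → Act → S → Prop}

theorem kTrans_inl_iff {s : S} {y : KState Tr} :
    KTrans Tr (.inl s) y ↔ ∃ t, y = .inr t ∧ t.1.1 = s := by
  cases y <;> simp [KTrans]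

theorem kTrans_inr_iff {t : {t : S × Act × S // Tr t.1 t.2.1 t.2.2}} {y : KState Tr} :
    KTrans Tr (.inr t) y ↔ y = .inl t.1.2.2 := by
  cases y <;> simp [KTrans, eq_comm]

theorem ksPath_states_two_mul (σ : LPath Tr) (k : ℕ) :
    (ksPath Tr σ).states (2 * k) = .inl (σ.states k) := by
  simp [ksPath]

theorem ksPath_states_two_mul_add_one (σ : LPath Tr) (k : ℕ) :
    (ksPath Tr σ).states (2 * k + 1) =
      .inr ⟨(σ.states k, σ.acts k, σ.states (k + 1)), σ.valid k⟩ := by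
  have hk : (2 * k + 1) / 2 = k := by omega
  simp [ksPath, hk]

theorem ksPath_states_zero (σ : LPath Tr) : (ksPath Tr σ).states 0 = .inl (σ.states 0) :=
  ksPath_states_two_mul σ 0

theorem ksPath_suffix_two_mul (σ : LPath Tr) (k : ℕ) :
    (ksPath Tr σ).suffix (2 * k) = ksPath Tr (σ.suffix k) := by
  refine KPath.ext fun n => ?_
  obtain ⟨m, rfl | rfl⟩ := Nat.even_or_odd' n
  · rw [KPath.suffix_states, ← Nat.mul_add, ksPath_states_two_mul, ksPath_states_two_mul]
    rfl
  · rw [KPath.suffix_states, show 2 * m + 1 + 2 * k = 2 * (m + k) + 1 by ring,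
      ksPath_states_two_mul_add_one, ksPath_states_two_mul_add_one]
    simp only [LPath.suffix, Nat.add_right_comm m 1 k]

theorem ksPath_suffix_one_suffix_one (σ : LPath Tr) :
    ((ksPath Tr σ).suffix 1).suffix 1 = ksPath Tr (σ.suffix 1) := by
  rw [KPath.suffix_suffix]
  exact ksPath_suffix_two_mul σ 1

theorem csatS_F_ksPath_states_iff (σ : LPath Tr) (n : ℕ) :
    csatS (KTrans Tr) (KLab Tr) (.atom (Sum.inr ())) ((ksPath Tr σ).states n) ↔ Even n := by
  obtain ⟨m, rfl | rfl⟩ := Nat.even_or_odd' n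
  · simp [ksPath_states_two_mul, csatS, KLab]
  · simp [ksPath_states_two_mul_add_one, csatS, KLab]

theorem KPath.exists_transition_at_odd (τ : KPath (KTrans Tr)) {s : S}
    (h0 : τ.states 0 = .inl s) (n : ℕ) :
    ∃ t, τ.states (2 * n) = .inl t.1.1 ∧ τ.states (2 * n + 1) = .inr t := by
  induction n with
  | zero =>
    have h := τ.valid 0
    rw [h0, kTrans_inl_iff] at h
    obtain ⟨t, ht, rfl⟩ := h
    exact ⟨t, h0, ht⟩
  | succ n ih =>
    obtain ⟨t, -, ht⟩ := ih
    have hnext := τ.valid (2 * n + 1)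
    rw [ht, kTrans_inr_iff] at hnext
    have h := τ.valid (2 * n + 2)
    rw [hnext, kTrans_inl_iff] at h
    obtain ⟨t', ht', hlink⟩ := h
    refine ⟨t', ?_, ht'⟩
    rw [hlink, show 2 * (n + 1) = 2 * n + 1 + 1 by ring]
    exact hnext

theorem exists_ksPath_eq (τ : KPath (KTrans Tr)) {s : S} (h0 : τ.states 0 = .inl s) :
    ∃ σ : LPath Tr, σ.states 0 = s ∧ ksPath Tr σ = τ := by
  choose g hg_even hg_odd using τ.exists_transition_at_odd h0
  have hlink : ∀ n, (g n).1.2.2 = (g (n + 1)).1.1 := by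
    intro n
    have h := τ.valid (2 * n + 1)
    rw [hg_odd, kTrans_inr_iff, show 2 * n + 1 + 1 = 2 * (n + 1) by ring, hg_even] at h
    exact (Sum.inl_injective h).symm
  let σ : LPath Tr :=
    { states n := (g n).1.1
      acts n := (g n).1.2.1
      valid n := hlink n ▸ (g n).2 }
  refine ⟨σ, Sum.inl_injective ((hg_even 0).symm.trans h0), KPath.ext fun n => ?_⟩
  obtain ⟨m, rfl | rfl⟩ := Nat.even_or_odd' n
  · rw [ksPath_states_two_mul, hg_even]
  · rw [ksPath_states_two_mul_add_one, hg_odd]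
    congr 1
    exact Subtype.ext (Prod.ext rfl (Prod.ext rfl (hlink m).symm))

theorem exists_lpath_iff_exists_kpath (Q : KPath (KTrans Tr) → Prop) (s : S) :
    (∃ σ : LPath Tr, σ.states 0 = s ∧ Q (ksPath Tr σ)) ↔
      ∃ τ : KPath (KTrans Tr), τ.states 0 = .inl s ∧ Q τ := by
  constructor
  · rintro ⟨σ, rfl, hσ⟩
    exact ⟨ksPath Tr σ, ksPath_states_zero σ, hσ⟩
  · rintro ⟨τ, h0, hτ⟩
    obtain ⟨σ, hσ0, rfl⟩ := exists_ksPath_eq τ h0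
    exact ⟨σ, hσ0, hτ⟩

mutual

theorem asatS_iff_csatS_ksS (φ : ASF Act) (s : S) :
    asatS Tr φ s ↔ csatS (KTrans Tr) (KLab Tr) (ksS φ) (.inl s) := by
  cases φ with
  | tt => exact Iff.rfl
  | neg φ => simp only [asatS, ksS, csatS, asatS_iff_csatS_ksS φ]
  | and φ ψ => simp only [asatS, ksS, csatS, asatS_iff_csatS_ksS φ, asatS_iff_csatS_ksS ψ]
  | ex π =>
    simp only [asatS, ksS, csatS, asatP_iff_csatP_ksP π]
    exact exists_lpath_iff_exists_kpath _ s

theorem asatP_iff_csatP_ksP (π : APF Act) (σ : LPath Tr) :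
    asatP Tr π σ ↔ csatP (KTrans Tr) (KLab Tr) (ksP π) (ksPath Tr σ) := by
  cases π with
  | state φ =>
    simp only [asatP, ksP, csatP, ksPath_states_zero, asatS_iff_csatS_ksS φ]
  | neg π => simp only [asatP, ksP, csatP, asatP_iff_csatP_ksP π]
  | and π π' =>
    simp only [asatP, ksP, csatP, asatP_iff_csatP_ksP π, asatP_iff_csatP_ksP π']
  | next π =>
    simp only [asatP, ksP, csatP, ksPath_suffix_one_suffix_one, asatP_iff_csatP_ksP π]
  | anext a π =>
    have hact : ((ksPath Tr σ).suffix 1).states 0 =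
        .inr ⟨(σ.states 0, σ.acts 0, σ.states 1), σ.valid 0⟩ :=
      ksPath_states_two_mul_add_one σ 0
    simp only [asatP, ksP, csatP, ksPath_suffix_one_suffix_one, asatP_iff_csatP_ksP π, hact]
    simp [csatS, KLab, eq_comm]
  | unt π π' =>
    simp only [asatP, ksP, csatP, Fpf, KPath.suffix_states, Nat.zero_add,
      csatS_F_ksPath_states_iff]
    rw [until_even_iff]
    simp only [ksPath_suffix_two_mul, asatP_iff_csatP_ksP π, asatP_iff_csatP_ksP π']

end

end ks

/-- Let `L` be an LTS, `σ` a path in `L`, and `φ` an ACTL* formula.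
Then `ks` preserves truth: `L,σ ⊨ φ` iff `ks(L), ks(σ) ⊨ ks(φ)`. -/
theorem ks_preserves_truth {S Act : Type} (Tr : S → Act → S → Prop)
    (σ : LPath Tr) (φ : APF Act) :
    asatP Tr φ σ ↔ csatP (KTrans Tr) (KLab Tr) (ksP φ) (ksPath Tr σ) :=
  asatP_iff_csatP_ksP φ σ

end Stmt0
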